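/- Let D be an N-linear connection on E with curvature ℝ(X,Y)Z = D_X D_Y Z − D_Y D_X Z − D_{[X,Y]} Z. Then ℝ(∂/∂p_k^c, δ/δt^b) δ/δt^a = P^{d (k)}_{ab(c)} δ/δt^d, where P^{d (k)}_{ab(c)} = ∂A^d_{ab}/∂p_k^c − C^{d(k)}_{a(c)/b} + C^{d(r)}_{a(f)} P^{(f) (k)}_{(r)b(c)}, with C^{d(k)}_{a(c)/b} = δC^{d(k)}_{a(c)}/δt^b + C^{f(k)}_{a(c)} A^d_{fb} − C^{d(k)}_{f(c)} A^f_{ab} + C^{d(r)}_{a(f)} A^{(f)(k)}_{(r)(c)b} and P^{(f) (k)}_{(r)b(c)} = B^{(f)(k)}_{(r)b(c)} + A^{(f)(k)}_{(r)(c)b}; in particular the δ/δx- and ∂/∂p-components of ℝ(∂/∂p_k^c, δ/δt^b) δ/δt^a vanish. -/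

import Mathlib

noncomputable section

open scoped BigOperators

/-- The local model of the dual 1-jet bundle: `(t, x, p)` with `p : Fin m → Fin n → ℝ`,
`p a i = p_i^a`.  The tangent space at any point is identified with the same product. -/
abbrev E (m n : ℕ) : Type := (Fin m → ℝ) × (Fin n → ℝ) × (Fin m → Fin n → ℝ)

/-- The natural frame vector `∂/∂t^a`. -/
def dTnat (m n : ℕ) (a : Fin m) : E m n := (Pi.single a 1, 0, 0)

/-- The natural frame vector `∂/∂x^i`. -/
def dXnat (m n : ℕ) (i : Fin n) : E m n := (0, Pi.single i 1, 0)

/-- The natural (vertical) frame vector `∂/∂p_i^a`. -/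
def dPnat (m n : ℕ) (a : Fin m) (i : Fin n) : E m n := (0, 0, Pi.single a (Pi.single i 1))

/-- A nonlinear connection: coefficient families `N1 a i b = N1^{(a)}_{(i)b}` and
`N2 a i j = N2^{(a)}_{(i)j}`. -/
structure NLC (m n : ℕ) where
  N1 : Fin m → Fin n → Fin m → E m n → ℝ
  N2 : Fin m → Fin n → Fin n → E m n → ℝ

variable {m n : ℕ}

/-- Adapted frame vector field `δ/δt^b`. -/
def NLC.dT (N : NLC m n) (b : Fin m) : E m n → E m n :=
  fun u => (Pi.single b 1, 0, fun a i => -(N.N1 a i b u))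

/-- Adapted frame vector field `δ/δx^j`. -/
def NLC.dX (N : NLC m n) (j : Fin n) : E m n → E m n :=
  fun u => (0, Pi.single j 1, fun a i => -(N.N2 a i j u))

/-- The constant vertical frame vector field `∂/∂p_k^c`. -/
def dPfield (m n : ℕ) (c : Fin m) (k : Fin n) : E m n → E m n := fun _ => dPnat m n c k

/-- Lie bracket of vector fields on the model. -/
def lie (X Y : E m n → E m n) : E m n → E m n :=
  fun u => fderiv ℝ Y u (X u) - fderiv ℝ X u (Y u)

/-- The `δ/δt^c`-derivative of a function. -/
def NLC.delT (N : NLC m n) (c : Fin m) (f : E m n → ℝ) (u : E m n) : ℝ :=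
  fderiv ℝ f u (N.dT c u)

/-- The `δ/δx^k`-derivative of a function. -/
def NLC.delX (N : NLC m n) (k : Fin n) (f : E m n → ℝ) (u : E m n) : ℝ :=
  fderiv ℝ f u (N.dX k u)

/-- The `∂/∂p_k^c`-derivative of a function. -/
def delP (c : Fin m) (k : Fin n) (f : E m n → ℝ) (u : E m n) : ℝ :=
  fderiv ℝ f u (dPnat m n c k)

/-- `R^{(a)}_{(i)bc}`. -/
def NLC.R1 (N : NLC m n) (a : Fin m) (i : Fin n) (b c : Fin m) (u : E m n) : ℝ :=
  N.delT c (N.N1 a i b) u - N.delT b (N.N1 a i c) u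

/-- `R^{(a)}_{(i)bk}`. -/
def NLC.Rmix (N : NLC m n) (a : Fin m) (i : Fin n) (b : Fin m) (k : Fin n) (u : E m n) : ℝ :=
  N.delX k (N.N1 a i b) u - N.delT b (N.N2 a i k) u

/-- `R^{(a)}_{(i)jk}`. -/
def NLC.R2 (N : NLC m n) (a : Fin m) (i j k : Fin n) (u : E m n) : ℝ :=
  N.delX k (N.N2 a i j) u - N.delX j (N.N2 a i k) u

/-- `B^{(a)(k)}_{(i)b(c)} = ∂N1^{(a)}_{(i)b}/∂p_k^c`. -/
def NLC.B1 (N : NLC m n) (a : Fin m) (i : Fin n) (b c : Fin m) (k : Fin n) (u : E m n) : ℝ :=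
  delP c k (N.N1 a i b) u

/-- `B^{(a)(k)}_{(i)j(c)} = ∂N2^{(a)}_{(i)j}/∂p_k^c`. -/
def NLC.B2 (N : NLC m n) (a : Fin m) (i j : Fin n) (c : Fin m) (k : Fin n) (u : E m n) : ℝ :=
  delP c k (N.N2 a i j) u

/-- Smoothness of the coefficients of a nonlinear connection on a set. -/
def NLC.SmoothOn (N : NLC m n) (O : Set (E m n)) : Prop :=
  (∀ a i b, ContDiffOn ℝ (⊤ : ℕ∞) (N.N1 a i b) O) ∧ (∀ a i j, ContDiffOn ℝ (⊤ : ℕ∞) (N.N2 a i j) O)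

/-- The open set `U × V × P` of the model. -/
def modelSet (U : Set (Fin m → ℝ)) (V : Set (Fin n → ℝ)) : Set (E m n) :=
  U ×ˢ (V ×ˢ (Set.univ : Set (Fin m → Fin n → ℝ)))

/-- Jacobian matrix entry `(Jac f t) b a = ∂f^b/∂t^a`. -/
def Jac {k : ℕ} (f : (Fin k → ℝ) → (Fin k → ℝ)) (t : Fin k → ℝ) (b a : Fin k) : ℝ :=
  fderiv ℝ f t (Pi.single a 1) b

/-- A jet coordinate change: smooth diffeomorphisms `φ : U → U'` and `ψ : V → V'`. -/
structure JetChange (m n : ℕ) where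
  U : Set (Fin m → ℝ)
  U' : Set (Fin m → ℝ)
  V : Set (Fin n → ℝ)
  V' : Set (Fin n → ℝ)
  hUopen : IsOpen U
  hU'open : IsOpen U'
  hVopen : IsOpen V
  hV'open : IsOpen V'
  φ : (Fin m → ℝ) → (Fin m → ℝ)
  φi : (Fin m → ℝ) → (Fin m → ℝ)
  ψ : (Fin n → ℝ) → (Fin n → ℝ)
  ψi : (Fin n → ℝ) → (Fin n → ℝ)
  hφ : ContDiffOn ℝ (⊤ : ℕ∞) φ U
  hφi : ContDiffOn ℝ (⊤ : ℕ∞) φi U'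
  hψ : ContDiffOn ℝ (⊤ : ℕ∞) ψ V
  hψi : ContDiffOn ℝ (⊤ : ℕ∞) ψi V'
  hφmaps : Set.MapsTo φ U U'
  hφimaps : Set.MapsTo φi U' U
  hψmaps : Set.MapsTo ψ V V'
  hψimaps : Set.MapsTo ψi V' V
  hφleft : ∀ t ∈ U, φi (φ t) = t
  hφright : ∀ s ∈ U', φ (φi s) = s
  hψleft : ∀ x ∈ V, ψi (ψ x) = x
  hψright : ∀ y ∈ V', ψ (ψi y) = y

/-- The source domain `U × V × P` of a jet change. -/
def JetChange.src (C : JetChange m n) : Set (E m n) := modelSet C.U C.V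

/-- The induced map `Φ` on the dual 1-jet space:
`p̃_j^b = (∂t̃^b/∂t^c)(∂x^k/∂x̃^j) p_k^c`. -/
def JetChange.Φ (C : JetChange m n) : E m n → E m n :=
  fun u => (C.φ u.1, C.ψ u.2.1,
    fun b j => ∑ c, ∑ k, Jac C.φ u.1 b c * Jac C.ψi (C.ψ u.2.1) k j * u.2.2 c k)

/-- The transformation rule (7) for nonlinear connections under a jet change. -/
def JetChange.Rule7 (C : JetChange m n) (N N' : NLC m n) : Prop :=
  ∀ u ∈ C.src,
    (∀ b j a,
      ∑ c, N'.N1 b j c (C.Φ u) * Jac C.φ u.1 c a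
        = (∑ c, ∑ k, N.N1 c k a u * Jac C.φ u.1 b c * Jac C.ψi (C.ψ u.2.1) k j)
          - fderiv ℝ (fun v => (C.Φ v).2.2 b j) u (dTnat m n a))
    ∧ (∀ b j i,
      ∑ k, N'.N2 b j k (C.Φ u) * Jac C.ψ u.2.1 k i
        = (∑ c, ∑ k, N.N2 c k i u * Jac C.φ u.1 b c * Jac C.ψi (C.ψ u.2.1) k j)
          - fderiv ℝ (fun v => (C.Φ v).2.2 b j) u (dXnat m n i))

/-- The adapted 1-form `δp_i^a` evaluated at `u` on a tangent vector `ξ`. -/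
def delPform (N : NLC m n) (a : Fin m) (i : Fin n) (u : E m n) (ξ : E m n) : ℝ :=
  ξ.2.2 a i + (∑ b, N.N1 a i b u * ξ.1 b) + (∑ j, N.N2 a i j u * ξ.2.1 j)

/-- The `T`-horizontal subspace at `u`. -/
def NLC.HT (N : NLC m n) (u : E m n) : Submodule ℝ (E m n) :=
  Submodule.span ℝ (Set.range fun a => N.dT a u)

/-- The `M`-horizontal subspace at `u`. -/
def NLC.HM (N : NLC m n) (u : E m n) : Submodule ℝ (E m n) :=
  Submodule.span ℝ (Set.range fun i => N.dX i u)

/-- The vertical subspace. -/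
def Vert (m n : ℕ) : Submodule ℝ (E m n) :=
  Submodule.span ℝ (Set.range fun ai : Fin m × Fin n => dPnat m n ai.1 ai.2)

/-- The horizontal subspace at `u`. -/
def NLC.Hor (N : NLC m n) (u : E m n) : Submodule ℝ (E m n) :=
  Submodule.span ℝ ((Set.range fun a => N.dT a u) ∪ (Set.range fun i => N.dX i u))

/-- Pointwise `T`-horizontal projection. -/
def NLC.hT (N : NLC m n) (u : E m n) (ξ : E m n) : E m n :=
  (ξ.1, 0, fun a i => -∑ b, N.N1 a i b u * ξ.1 b)

/-- Pointwise `M`-horizontal projection. -/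
def NLC.hM (N : NLC m n) (u : E m n) (ξ : E m n) : E m n :=
  (0, ξ.2.1, fun a i => -∑ j, N.N2 a i j u * ξ.2.1 j)

/-- Pointwise vertical projection. -/
def NLC.w (N : NLC m n) (u : E m n) (ξ : E m n) : E m n :=
  (0, 0, fun a i => ξ.2.2 a i + (∑ b, N.N1 a i b u * ξ.1 b) + (∑ j, N.N2 a i j u * ξ.2.1 j))

/-- The almost product structure `ℙ = h_T + h_M − w` of a nonlinear connection, pointwise. -/
def NLC.apP (N : NLC m n) (u : E m n) (ξ : E m n) : E m n :=
  (ξ.1, ξ.2.1, fun a i =>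
    -(ξ.2.2 a i) - 2 * (∑ b, N.N1 a i b u * ξ.1 b) - 2 * (∑ j, N.N2 a i j u * ξ.2.1 j))

/-- `h_T` applied to a vector field. -/
def NLC.hTF (N : NLC m n) (X : E m n → E m n) : E m n → E m n := fun u => N.hT u (X u)

/-- `h_M` applied to a vector field. -/
def NLC.hMF (N : NLC m n) (X : E m n → E m n) : E m n → E m n := fun u => N.hM u (X u)

/-- `w` applied to a vector field. -/
def NLC.wF (N : NLC m n) (X : E m n → E m n) : E m n → E m n := fun u => N.w u (X u)

/-- `ℙ` applied to a vector field. -/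
def NLC.PF (N : NLC m n) (X : E m n → E m n) : E m n → E m n := fun u => N.apP u (X u)

/-- The Nijenhuis tensor of the almost product structure `ℙ`. -/
def Nij (N : NLC m n) (X Y : E m n → E m n) : E m n → E m n :=
  fun u => N.PF (N.PF (lie X Y)) u + lie (N.PF X) (N.PF Y) u
    - N.PF (lie (N.PF X) Y) u - N.PF (lie X (N.PF Y)) u

/-- An `N`-linear connection: the nine adapted coefficient families.
Index conventions: `A1 a b c = A^a_{bc}`, `A2 i j c = A^i_{jc}`,
`A3 a i b j c = A^{(a)(j)}_{(i)(b)c}`, `H1 a b k = H^a_{bk}`, `H2 i j k = H^i_{jk}`,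
`H3 a i b j k = H^{(a)(j)}_{(i)(b)k}`, `C1 a b c k = C^{a(k)}_{b(c)}`,
`C2 i j c k = C^{i(k)}_{j(c)}`, `C3 a i b j c k = C^{(a)(j)(k)}_{(i)(b)(c)}`. -/
structure NLinConn (m n : ℕ) where
  A1 : Fin m → Fin m → Fin m → E m n → ℝ
  A2 : Fin n → Fin n → Fin m → E m n → ℝ
  A3 : Fin m → Fin n → Fin m → Fin n → Fin m → E m n → ℝ
  H1 : Fin m → Fin m → Fin n → E m n → ℝ
  H2 : Fin n → Fin n → Fin n → E m n → ℝ
  H3 : Fin m → Fin n → Fin m → Fin n → Fin n → E m n → ℝ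
  C1 : Fin m → Fin m → Fin m → Fin n → E m n → ℝ
  C2 : Fin n → Fin n → Fin m → Fin n → E m n → ℝ
  C3 : Fin m → Fin n → Fin m → Fin n → Fin m → Fin n → E m n → ℝ

/-- Smoothness of the coefficients of an `N`-linear connection on a set. -/
def NLinConn.SmoothOn (D : NLinConn m n) (O : Set (E m n)) : Prop :=
  (∀ a b c, ContDiffOn ℝ (⊤ : ℕ∞) (D.A1 a b c) O) ∧ (∀ i j c, ContDiffOn ℝ (⊤ : ℕ∞) (D.A2 i j c) O) ∧
  (∀ a i b j c, ContDiffOn ℝ (⊤ : ℕ∞) (D.A3 a i b j c) O) ∧ (∀ a b k, ContDiffOn ℝ (⊤ : ℕ∞) (D.H1 a b k) O) ∧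
  (∀ i j k, ContDiffOn ℝ (⊤ : ℕ∞) (D.H2 i j k) O) ∧ (∀ a i b j k, ContDiffOn ℝ (⊤ : ℕ∞) (D.H3 a i b j k) O) ∧
  (∀ a b c k, ContDiffOn ℝ (⊤ : ℕ∞) (D.C1 a b c k) O) ∧ (∀ i j c k, ContDiffOn ℝ (⊤ : ℕ∞) (D.C2 i j c k) O) ∧
  (∀ a i b j c k, ContDiffOn ℝ (⊤ : ℕ∞) (D.C3 a i b j c k) O)

/-- Adapted `t`-component of a vector field. -/
def compT (X : E m n → E m n) (a : Fin m) (u : E m n) : ℝ := (X u).1 a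

/-- Adapted `x`-component of a vector field. -/
def compX (X : E m n → E m n) (i : Fin n) (u : E m n) : ℝ := (X u).2.1 i

/-- Adapted vertical component of a vector field. -/
def compP (N : NLC m n) (X : E m n → E m n) (a : Fin m) (i : Fin n) (u : E m n) : ℝ :=
  (X u).2.2 a i + (∑ b, N.N1 a i b u * (X u).1 b) + (∑ j, N.N2 a i j u * (X u).2.1 j)

/-- Reconstruct a tangent vector from its adapted components. -/
def fromA (N : NLC m n) (ft : Fin m → ℝ) (fx : Fin n → ℝ) (fp : Fin m → Fin n → ℝ)
    (u : E m n) : E m n :=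
  (ft, fx, fun a i => fp a i - (∑ b, N.N1 a i b u * ft b) - (∑ j, N.N2 a i j u * fx j))

/-- Covariant derivative `D_{δ/δt^c} Y`. -/
def covT (N : NLC m n) (D : NLinConn m n) (c : Fin m) (Y : E m n → E m n) : E m n → E m n :=
  fun u => fromA N
    (fun a => N.delT c (compT Y a) u + ∑ b, compT Y b u * D.A1 a b c u)
    (fun i => N.delT c (compX Y i) u + ∑ j, compX Y j u * D.A2 i j c u)
    (fun a i => N.delT c (compP N Y a i) u - ∑ b, ∑ j, compP N Y b j u * D.A3 a i b j c u)
    u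

/-- Covariant derivative `D_{δ/δx^k} Y`. -/
def covX (N : NLC m n) (D : NLinConn m n) (k : Fin n) (Y : E m n → E m n) : E m n → E m n :=
  fun u => fromA N
    (fun a => N.delX k (compT Y a) u + ∑ b, compT Y b u * D.H1 a b k u)
    (fun i => N.delX k (compX Y i) u + ∑ j, compX Y j u * D.H2 i j k u)
    (fun a i => N.delX k (compP N Y a i) u - ∑ b, ∑ j, compP N Y b j u * D.H3 a i b j k u)
    u

/-- Covariant derivative `D_{∂/∂p_k^c} Y`. -/
def covP (N : NLC m n) (D : NLinConn m n) (c : Fin m) (k : Fin n) (Y : E m n → E m n) :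
    E m n → E m n :=
  fun u => fromA N
    (fun a => delP c k (compT Y a) u + ∑ b, compT Y b u * D.C1 a b c k u)
    (fun i => delP c k (compX Y i) u + ∑ j, compX Y j u * D.C2 i j c k u)
    (fun a i => delP c k (compP N Y a i) u - ∑ b, ∑ j, compP N Y b j u * D.C3 a i b j c k u)
    u

/-- Covariant derivative `D_X Y` of an `N`-linear connection. -/
def covD (N : NLC m n) (D : NLinConn m n) (X Y : E m n → E m n) : E m n → E m n :=
  fun u => (∑ c, compT X c u • covT N D c Y u) + (∑ k, compX X k u • covX N D k Y u)
    + ∑ c, ∑ k, compP N X c k u • covP N D c k Y u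

/-- Torsion of an `N`-linear connection. -/
def tors (N : NLC m n) (D : NLinConn m n) (X Y : E m n → E m n) : E m n → E m n :=
  fun u => covD N D X Y u - covD N D Y X u - lie X Y u

/-- Curvature of an `N`-linear connection. -/
def curvR (N : NLC m n) (D : NLinConn m n) (X Y Z : E m n → E m n) : E m n → E m n :=
  fun u => covD N D X (covD N D Y Z) u - covD N D Y (covD N D X Z) u
    - covD N D (lie X Y) Z u

/-- The Berwald nonlinear connection associated to linear connections `χ`, `Γ`. -/
def berN (χ : Fin m → Fin m → Fin m → (Fin m → ℝ) → ℝ)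
    (Γ : Fin n → Fin n → Fin n → (Fin n → ℝ) → ℝ) : NLC m n where
  N1 := fun a i b u => ∑ c, χ a c b u.1 * u.2.2 c i
  N2 := fun a i j u => -∑ k, Γ k i j u.2.1 * u.2.2 a k

/-- The Berwald `N`-linear connection associated to linear connections `χ`, `Γ`. -/
def berD (χ : Fin m → Fin m → Fin m → (Fin m → ℝ) → ℝ)
    (Γ : Fin n → Fin n → Fin n → (Fin n → ℝ) → ℝ) : NLinConn m n where
  A1 := fun a b c u => χ a b c u.1
  A2 := fun _ _ _ _ => 0
  A3 := fun a i b j c u => -((if j = i then (1 : ℝ) else 0) * χ a b c u.1)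
  H1 := fun _ _ _ _ => 0
  H2 := fun i j k u => Γ i j k u.2.1
  H3 := fun a i b j k u => (if a = b then (1 : ℝ) else 0) * Γ j i k u.2.1
  C1 := fun _ _ _ _ _ => 0
  C2 := fun _ _ _ _ _ => 0
  C3 := fun _ _ _ _ _ _ _ => 0

/-- Curvature tensor `κ^f_{gab}` of a linear connection `χ` on `U`. -/
def kapC (χ : Fin m → Fin m → Fin m → (Fin m → ℝ) → ℝ) (f g a b : Fin m)
    (t : Fin m → ℝ) : ℝ :=
  fderiv ℝ (χ f g a) t (Pi.single b 1) - fderiv ℝ (χ f g b) t (Pi.single a 1)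
    + (∑ e, χ e g a t * χ f e b t) - ∑ e, χ e g b t * χ f e a t

/-- Curvature tensor `𝐫^s_{rij}` of a linear connection `Γ` on `V`. -/
def rC (Γ : Fin n → Fin n → Fin n → (Fin n → ℝ) → ℝ) (s r i j : Fin n)
    (x : Fin n → ℝ) : ℝ :=
  fderiv ℝ (Γ s r i) x (Pi.single j 1) - fderiv ℝ (Γ s r j) x (Pi.single i 1)
    + (∑ l, Γ l r i x * Γ s l j x) - ∑ l, Γ l r j x * Γ s l i x

end

section Helpers

open scoped BigOperators

variable {m n : ℕ}

lemma delT_const (N : NLC m n) (c : Fin m) (r : ℝ) (u : E m n) :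
    N.delT c (fun _ => r) u = 0 := by simp [NLC.delT]

lemma delP_const (c : Fin m) (k : Fin n) (r : ℝ) (u : E m n) :
    delP c k (fun _ : E m n => r) u = 0 := by simp [delP]

lemma compT_dT (N : NLC m n) (a d : Fin m) :
    compT (N.dT a) d = fun _ => (Pi.single a 1 : Fin m → ℝ) d := rfl

lemma compX_dT (N : NLC m n) (a : Fin m) (i : Fin n) :
    compX (N.dT a) i = fun _ => (0:ℝ) := rfl

lemma compP_dT (N : NLC m n) (a d : Fin m) (i : Fin n) :
    compP N (N.dT a) d i = fun _ => (0:ℝ) := by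
  funext u
  simp [compP, NLC.dT, Pi.single_apply, mul_ite, Finset.sum_ite_eq']

lemma compT_dPf (c d : Fin m) (k : Fin n) :
    compT (dPfield m n c k) d = fun _ => (0:ℝ) := rfl

lemma compX_dPf (c : Fin m) (k i : Fin n) :
    compX (dPfield m n c k) i = fun _ => (0:ℝ) := rfl

lemma compP_dPf (N : NLC m n) (c d : Fin m) (k i : Fin n) :
    compP N (dPfield m n c k) d i = fun _ =>
      (Pi.single c (Pi.single k 1) : Fin m → Fin n → ℝ) d i := by
  funext u
  simp [compP, dPfield, dPnat]

lemma covD_dTfield (N : NLC m n) (D : NLinConn m n) (b : Fin m) (Z : E m n → E m n) :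
    covD N D (N.dT b) Z = covT N D b Z := by
  funext u
  simp [covD, compT_dT, compX_dT, compP_dT, Pi.single_apply, ite_smul,
    Finset.sum_ite_eq']

lemma covD_dPfield (N : NLC m n) (D : NLinConn m n) (c : Fin m) (k : Fin n)
    (Z : E m n → E m n) :
    covD N D (dPfield m n c k) Z = covP N D c k Z := by
  funext u
  simp [covD, compT_dPf, compX_dPf, compP_dPf, Pi.single_apply, ite_smul,
    ite_apply, Finset.sum_ite_eq']

end Helpers
section Helpers2

open scoped BigOperators

variable {m n : ℕ}

lemma compT_fromA (N : NLC m n) (g : Fin m → E m n → ℝ) (d : Fin m) :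
    compT (fun v => fromA N (fun e => g e v) 0 0 v) d = g d := rfl

lemma compX_fromA (N : NLC m n) (g : Fin m → E m n → ℝ) (i : Fin n) :
    compX (fun v => fromA N (fun e => g e v) 0 0 v) i = fun _ => (0:ℝ) := rfl

lemma compP_fromA (N : NLC m n) (g : Fin m → E m n → ℝ) (d : Fin m) (i : Fin n) :
    compP N (fun v => fromA N (fun e => g e v) 0 0 v) d i = fun _ => (0:ℝ) := by
  funext v
  simp [compP, fromA]

lemma covT_fromA (N : NLC m n) (D : NLinConn m n) (b : Fin m)
    (g : Fin m → E m n → ℝ) :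
    covT N D b (fun v => fromA N (fun e => g e v) 0 0 v)
      = fun u => fromA N
          (fun d => N.delT b (g d) u + ∑ f, g f u * D.A1 d f b u) 0 0 u := by
  funext u
  show fromA N _ _ _ u = fromA N _ _ _ u
  rw [show (fun d => N.delT b (compT (fun v => fromA N (fun e => g e v) 0 0 v) d) u
        + ∑ f, compT (fun v => fromA N (fun e => g e v) 0 0 v) f u * D.A1 d f b u)
      = fun d => N.delT b (g d) u + ∑ f, g f u * D.A1 d f b u from rfl]
  congr 1
  · funext i
    simp [compX_fromA, delT_const]
  · funext d i
    simp [compP_fromA, delT_const]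

lemma covP_fromA (N : NLC m n) (D : NLinConn m n) (c : Fin m) (k : Fin n)
    (g : Fin m → E m n → ℝ) :
    covP N D c k (fun v => fromA N (fun e => g e v) 0 0 v)
      = fun u => fromA N
          (fun d => delP c k (g d) u + ∑ f, g f u * D.C1 d f c k u) 0 0 u := by
  funext u
  show fromA N _ _ _ u = fromA N _ _ _ u
  congr 1
  · funext i
    simp [compX_fromA, delP_const]
  · funext d i
    simp [compP_fromA, delP_const]

lemma covT_dT (N : NLC m n) (D : NLinConn m n) (b a : Fin m) :
    covT N D b (N.dT a)
      = fun u => fromA N (fun d => D.A1 d a b u) 0 0 u := by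
  funext u
  show fromA N _ _ _ u = fromA N _ _ _ u
  congr 1
  · funext d
    rw [compT_dT]
    simp [delT_const, compT_dT, Pi.single_apply, ite_mul, Finset.sum_ite_eq]
  · funext i
    simp [compX_dT, delT_const]
  · funext d i
    simp [compP_dT, delT_const]

lemma covP_dT (N : NLC m n) (D : NLinConn m n) (c : Fin m) (k : Fin n) (a : Fin m) :
    covP N D c k (N.dT a)
      = fun u => fromA N (fun d => D.C1 d a c k u) 0 0 u := by
  funext u
  show fromA N _ _ _ u = fromA N _ _ _ u
  congr 1
  · funext d
    rw [compT_dT]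
    simp [delP_const, compT_dT, Pi.single_apply, ite_mul, Finset.sum_ite_eq]
  · funext i
    simp [compX_dT, delP_const]
  · funext d i
    simp [compP_dT, delP_const]

lemma sum_mk {ι α β : Type*} [AddCommMonoid α] [AddCommMonoid β]
    (s : Finset ι) (f : ι → α) (g : ι → β) :
    ∑ i ∈ s, (f i, g i) = (∑ i ∈ s, f i, ∑ i ∈ s, g i) := by
  induction s using Finset.cons_induction with
  | empty => simp; rfl
  | cons a s ha ih => simp [Finset.sum_cons, ih, Prod.add_def]

lemma fromA_eq_sum (N : NLC m n) (s : Fin m → ℝ) (u : E m n) :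
    fromA N s 0 0 u = ∑ d, s d • N.dT d u := by
  have h : ∀ d : Fin m, s d • N.dT d u
      = (s d • (Pi.single d 1 : Fin m → ℝ),
         (0 : Fin n → ℝ),
         fun a i => s d * (-(N.N1 a i d u))) := by
    intro d
    refine Prod.ext ?_ (Prod.ext ?_ ?_)
    · simp [NLC.dT]
    · simp [NLC.dT]
    · funext a i
      simp [NLC.dT]
  rw [Finset.sum_congr rfl fun d _ => h d, sum_mk]
  rw [sum_mk]
  refine Prod.ext ?_ (Prod.ext ?_ ?_)
  · funext e
    simp [fromA, Finset.sum_apply, Pi.single_apply, smul_eq_mul, mul_ite,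
      Finset.sum_ite_eq]
  · simp [fromA]
  · funext a i
    simp [fromA, Finset.sum_apply, Finset.mul_sum]
    exact Finset.sum_congr rfl fun d _ => by ring

end Helpers2
section Helpers3

open scoped BigOperators

variable {m n : ℕ}

lemma lie_val (N : NLC m n) {O : Set (E m n)} (hO : IsOpen O)
    (hN : ∀ a i b, ContDiffOn ℝ (⊤ : ℕ∞) (N.N1 a i b) O)
    {u : E m n} (hu : u ∈ O) (b c : Fin m) (k : Fin n) :
    lie (dPfield m n c k) (N.dT b) u
      = (0, 0, fun f r => -(N.B1 f r b c k u)) := by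
  have hdiff : ∀ f r, DifferentiableAt ℝ (N.N1 f r b) u := fun f r =>
    ((hN f r b).contDiffAt (hO.mem_nhds hu)).differentiableAt (by simp)
  have hdT : N.dT b = fun v : E m n =>
      ((Pi.single b 1 : Fin m → ℝ),
        ((0 : Fin n → ℝ), fun f r => -(N.N1 f r b v))) := rfl
  have hF : HasFDerivAt (N.dT b)
      ((0 : E m n →L[ℝ] (Fin m → ℝ)).prod
        ((0 : E m n →L[ℝ] (Fin n → ℝ)).prod
          (ContinuousLinearMap.pi fun f => ContinuousLinearMap.pi fun r =>
            -(fderiv ℝ (N.N1 f r b) u)))) u := by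
    rw [hdT]
    refine HasFDerivAt.prodMk (hasFDerivAt_const _ _)
      (HasFDerivAt.prodMk (hasFDerivAt_const _ _) ?_)
    exact hasFDerivAt_pi.2 fun f => hasFDerivAt_pi.2 fun r =>
      ((hdiff f r).hasFDerivAt).neg
  have h0 : fderiv ℝ (dPfield m n c k) u = 0 := by
    unfold dPfield
    simp
  simp only [lie, h0, hF.fderiv, dPfield, ContinuousLinearMap.zero_apply, sub_zero,
    ContinuousLinearMap.prod_apply, ContinuousLinearMap.pi_apply,
    ContinuousLinearMap.neg_apply, NLC.B1, delP]
  refine Prod.ext rfl (Prod.ext rfl ?_)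
  funext f r
  simp

lemma sum_sum_smul {ι κ α : Type*} [Fintype ι] [Fintype κ] [Fintype α]
    {M : Type*} [AddCommMonoid M] [Module ℝ M]
    (c : ι → κ → ℝ) (w : ι → κ → α → ℝ) (v : α → M) :
    ∑ f, ∑ r, c f r • ∑ d, w f r d • v d
      = ∑ d, (∑ f, ∑ r, c f r * w f r d) • v d := by
  simp only [Finset.smul_sum, smul_smul, Finset.sum_smul]
  calc ∑ f, ∑ r, ∑ d, (c f r * w f r d) • v d
      = ∑ f, ∑ d, ∑ r, (c f r * w f r d) • v d :=
        Finset.sum_congr rfl fun f _ => Finset.sum_comm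
    _ = ∑ d, ∑ f, ∑ r, (c f r * w f r d) • v d := Finset.sum_comm

end Helpers3
section Statements

open scoped BigOperators

theorem stmt15 (m n : ℕ) (U : Set (Fin m → ℝ)) (V : Set (Fin n → ℝ))
    (hU : IsOpen U) (hV : IsOpen V) (N : NLC m n) (hN : N.SmoothOn (modelSet U V))
    (D : NLinConn m n) (hD : D.SmoothOn (modelSet U V)) :
    ∀ u ∈ modelSet U V, ∀ (a b c : Fin m) (k : Fin n),
      curvR N D (dPfield m n c k) (N.dT b) (N.dT a) u
        = ∑ d, (delP c k (D.A1 d a b) u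
            - (N.delT b (D.C1 d a c k) u + (∑ f, D.C1 f a c k u * D.A1 d f b u)
                - (∑ f, D.C1 d f c k u * D.A1 f a b u)
                + ∑ f, ∑ r, D.C1 d a f r u * D.A3 f r c k b u)
            + ∑ f, ∑ r, D.C1 d a f r u * (N.B1 f r b c k u + D.A3 f r c k b u))
          • N.dT d u := by
  intro u hu a b c k
  have hopen : IsOpen (modelSet U V) := hU.prod (hV.prod isOpen_univ)
  have hlie := lie_val N hopen hN.1 hu b c k
  have h3 : covD N D (lie (dPfield m n c k) (N.dT b)) (N.dT a) u
      = ∑ f, ∑ r, (-(N.B1 f r b c k u)) • covP N D f r (N.dT a) u := by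
    simp [covD, compT, compX, compP, hlie]
  show covD N D (dPfield m n c k) (covD N D (N.dT b) (N.dT a)) u
      - covD N D (N.dT b) (covD N D (dPfield m n c k) (N.dT a)) u
      - covD N D (lie (dPfield m n c k) (N.dT b)) (N.dT a) u = _
  rw [covD_dTfield N D b (N.dT a), covT_dT,
      covD_dPfield N D c k (N.dT a), covP_dT,
      covD_dPfield N D c k, covP_fromA N D c k (fun e => D.A1 e a b),
      covD_dTfield N D b, covT_fromA N D b (fun e => D.C1 e a c k),
      h3]
  simp only [covP_dT, fromA_eq_sum, sum_sum_smul]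
  rw [← Finset.sum_sub_distrib, ← Finset.sum_sub_distrib]
  refine Finset.sum_congr rfl fun d _ => ?_
  rw [← sub_smul, ← sub_smul]
  congr 1
  have e1 : ∑ f, ∑ r, D.C1 d a f r u * (N.B1 f r b c k u + D.A3 f r c k b u)
      = (∑ f, ∑ r, D.C1 d a f r u * N.B1 f r b c k u)
        + ∑ f, ∑ r, D.C1 d a f r u * D.A3 f r c k b u := by
    simp [mul_add, Finset.sum_add_distrib]
  have e2 : ∑ f, ∑ r, (-(N.B1 f r b c k u)) * D.C1 d a f r u
      = -∑ f, ∑ r, D.C1 d a f r u * N.B1 f r b c k u := by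
    rw [← Finset.sum_neg_distrib]
    refine Finset.sum_congr rfl fun f _ => ?_
    rw [← Finset.sum_neg_distrib]
    exact Finset.sum_congr rfl fun r _ => by ring
  have e4 : ∑ f, D.A1 f a b u * D.C1 d f c k u
      = ∑ f, D.C1 d f c k u * D.A1 f a b u :=
    Finset.sum_congr rfl fun f _ => mul_comm _ _
  rw [e1, e2, e4]
  ring

end Statements
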